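/- Let p be a natural number with p > 1 such that the four numbers p, p+2, p+6, p+8 are pairwise coprime. Then p, p+2, p+6, p+8 are all prime simultaneously if and only if the rational number ((p−1)! + 1)/p + (2!·(p−1)! + 1)/(p+2) + (6!·(p−1)! + 1)/(p+6) + (8!·(p−1)! + 1)/(p+8) is an integer. -/
import Mathlib

private lemma dvd_shift {m x y : ℤ} (h : m ∣ x - y) : m ∣ x + 1 ↔ m ∣ y + 1 := by
  constructor <;> intro h2
  · have h3 := dvd_sub h2 h
    rw [show x + 1 - (x - y) = y + 1 by ring] at h3; exact h3
  · have h3 := dvd_add h h2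
    rw [show x - y + (y + 1) = x + 1 by ring] at h3; exact h3

private lemma wilson' (n : ℕ) (hn : 1 < n) :
    n.Prime ↔ (n : ℤ) ∣ ((n - 1).factorial : ℤ) + 1 := by
  rw [Nat.prime_iff_fac_equiv_neg_one (by omega : n ≠ 1),
    ← ZMod.intCast_zmod_eq_zero_iff_dvd]
  push_cast
  exact eq_neg_iff_add_eq_zero

theorem quadruple_primes_char (p : ℕ) (hp : 1 < p)
    (h1 : Nat.Coprime p (p + 2)) (h2 : Nat.Coprime p (p + 6)) (h3 : Nat.Coprime p (p + 8))
    (h4 : Nat.Coprime (p + 2) (p + 6)) (h5 : Nat.Coprime (p + 2) (p + 8))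
    (h6 : Nat.Coprime (p + 6) (p + 8)) :
    (p.Prime ∧ (p + 2).Prime ∧ (p + 6).Prime ∧ (p + 8).Prime) ↔
      ∃ z : ℤ,
        (((p - 1).factorial : ℚ) + 1) / (p : ℚ) +
          ((Nat.factorial 2 : ℚ) * ((p - 1).factorial : ℚ) + 1) / ((p : ℚ) + 2) +
          ((Nat.factorial 6 : ℚ) * ((p - 1).factorial : ℚ) + 1) / ((p : ℚ) + 6) +
          ((Nat.factorial 8 : ℚ) * ((p - 1).factorial : ℚ) + 1) / ((p : ℚ) + 8) = (z : ℚ) := by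
  have hq0 : (p : ℚ) ≠ 0 := by positivity
  have hq2 : (p : ℚ) + 2 ≠ 0 := by positivity
  have hq6 : (p : ℚ) + 6 ≠ 0 := by positivity
  have hq8 : (p : ℚ) + 8 ≠ 0 := by positivity
  -- factorial relations over ℤ
  have hfp : (p.factorial : ℤ) = (p : ℤ) * ((p - 1).factorial : ℤ) := by
    have h : p.factorial = p * (p - 1).factorial := by
      conv_lhs => rw [show p = (p - 1) + 1 by omega]
      rw [Nat.factorial_succ, show p - 1 + 1 = p by omega]
    rw [h]; push_cast; ring
  have e2 : ((p + 2 - 1).factorial : ℤ)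
      = ((p : ℤ) + 1) * ((p : ℤ) * ((p - 1).factorial : ℤ)) := by
    rw [show p + 2 - 1 = p + 1 by omega, Nat.factorial_succ]
    push_cast [hfp]; ring
  have e6 : ((p + 6 - 1).factorial : ℤ)
      = ((p : ℤ) + 5) * (((p : ℤ) + 4) * (((p : ℤ) + 3) * (((p : ℤ) + 2) *
        (((p : ℤ) + 1) * ((p : ℤ) * ((p - 1).factorial : ℤ)))))) := by
    rw [show p + 6 - 1 = p + 4 + 1 by omega, Nat.factorial_succ,
      show p + 4 = p + 3 + 1 by omega, Nat.factorial_succ,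
      show p + 3 = p + 2 + 1 by omega, Nat.factorial_succ,
      show p + 2 = p + 1 + 1 by omega, Nat.factorial_succ, Nat.factorial_succ]
    push_cast [hfp]; ring
  have e8 : ((p + 8 - 1).factorial : ℤ)
      = ((p : ℤ) + 7) * (((p : ℤ) + 6) * (((p : ℤ) + 5) * (((p : ℤ) + 4) *
        (((p : ℤ) + 3) * (((p : ℤ) + 2) *
        (((p : ℤ) + 1) * ((p : ℤ) * ((p - 1).factorial : ℤ)))))))) := by
    rw [show p + 8 - 1 = p + 6 + 1 by omega, Nat.factorial_succ,
      show p + 6 = p + 5 + 1 by omega, Nat.factorial_succ,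
      show p + 5 = p + 4 + 1 by omega, Nat.factorial_succ,
      show p + 4 = p + 3 + 1 by omega, Nat.factorial_succ,
      show p + 3 = p + 2 + 1 by omega, Nat.factorial_succ,
      show p + 2 = p + 1 + 1 by omega, Nat.factorial_succ, Nat.factorial_succ]
    push_cast [hfp]; ring
  set F : ℤ := ((p - 1).factorial : ℤ) with hFdef
  -- Wilson-style characterizations
  have w0 : p.Prime ↔ (p : ℤ) ∣ F + 1 := wilson' p hp
  have w2 : (p + 2).Prime ↔ (p : ℤ) + 2 ∣ 2 * F + 1 := by
    rw [wilson' (p + 2) (by omega)]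
    rw [show ((p + 2 : ℕ) : ℤ) = (p : ℤ) + 2 by push_cast; ring, e2]
    exact dvd_shift ⟨((p : ℤ) - 1) * F, by ring⟩
  have w6 : (p + 6).Prime ↔ (p : ℤ) + 6 ∣ 720 * F + 1 := by
    rw [wilson' (p + 6) (by omega)]
    rw [show ((p + 6 : ℕ) : ℤ) = (p : ℤ) + 6 by push_cast; ring, e6]
    exact dvd_shift ⟨((p:ℤ)^5 + 9*(p:ℤ)^4 + 31*(p:ℤ)^3 + 39*(p:ℤ)^2 + 40*(p:ℤ) - 120) * F,
      by ring⟩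
  have w8 : (p + 8).Prime ↔ (p : ℤ) + 8 ∣ 40320 * F + 1 := by
    rw [wilson' (p + 8) (by omega)]
    rw [show ((p + 8 : ℕ) : ℤ) = (p : ℤ) + 8 by push_cast; ring, e8]
    exact dvd_shift ⟨((p:ℤ)^7 + 20*(p:ℤ)^6 + 162*(p:ℤ)^5 + 664*(p:ℤ)^4 + 1457*(p:ℤ)^3
      + 1476*(p:ℤ)^2 + 1260*(p:ℤ) - 5040) * F, by ring⟩
  have hf2 : (Nat.factorial 2 : ℚ) = 2 := by norm_num [Nat.factorial]
  have hf6 : (Nat.factorial 6 : ℚ) = 720 := by norm_num [Nat.factorial]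
  have hf8 : (Nat.factorial 8 : ℚ) = 40320 := by norm_num [Nat.factorial]
  rw [w0, w2, w6, w8, hf2, hf6, hf8]
  constructor
  · rintro ⟨⟨a, ha⟩, ⟨b, hb⟩, ⟨c, hc⟩, ⟨d, hd⟩⟩
    refine ⟨a + b + c + d, ?_⟩
    have ha' : ((p - 1).factorial : ℚ) + 1 = (p : ℚ) * (a : ℚ) := by exact_mod_cast ha
    have hb' : (2 : ℚ) * ((p - 1).factorial : ℚ) + 1 = ((p : ℚ) + 2) * (b : ℚ) := by
      exact_mod_cast hb
    have hc' : (720 : ℚ) * ((p - 1).factorial : ℚ) + 1 = ((p : ℚ) + 6) * (c : ℚ) := by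
      exact_mod_cast hc
    have hd' : (40320 : ℚ) * ((p - 1).factorial : ℚ) + 1 = ((p : ℚ) + 8) * (d : ℚ) := by
      exact_mod_cast hd
    rw [ha', hb', hc', hd', mul_div_cancel_left₀ _ hq0, mul_div_cancel_left₀ _ hq2,
      mul_div_cancel_left₀ _ hq6, mul_div_cancel_left₀ _ hq8]
    push_cast; ring
  · rintro ⟨z, hz⟩
    have hZ : (F + 1) * (((p:ℤ) + 2) * (((p:ℤ) + 6) * ((p:ℤ) + 8)))
        + (2 * F + 1) * ((p:ℤ) * (((p:ℤ) + 6) * ((p:ℤ) + 8)))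
        + (720 * F + 1) * ((p:ℤ) * (((p:ℤ) + 2) * ((p:ℤ) + 8)))
        + (40320 * F + 1) * ((p:ℤ) * (((p:ℤ) + 2) * ((p:ℤ) + 6)))
        = z * ((p:ℤ) * (((p:ℤ) + 2) * (((p:ℤ) + 6) * ((p:ℤ) + 8)))) := by
      have hQ : ((((F + 1) * (((p:ℤ) + 2) * (((p:ℤ) + 6) * ((p:ℤ) + 8)))
          + (2 * F + 1) * ((p:ℤ) * (((p:ℤ) + 6) * ((p:ℤ) + 8)))
          + (720 * F + 1) * ((p:ℤ) * (((p:ℤ) + 2) * ((p:ℤ) + 8)))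
          + (40320 * F + 1) * ((p:ℤ) * (((p:ℤ) + 2) * ((p:ℤ) + 6)))) : ℤ) : ℚ)
          = ((z * ((p:ℤ) * (((p:ℤ) + 2) * (((p:ℤ) + 6) * ((p:ℤ) + 8)))) : ℤ) : ℚ) := by
        field_simp at hz
        push_cast [hFdef]
        linear_combination hz
      exact_mod_cast hQ
    -- coprimality over ℤ
    have c02 : IsCoprime ((p:ℤ)) ((p:ℤ) + 2) := by
      have := Nat.isCoprime_iff_coprime.mpr h1; push_cast at this; exact this
    have c06 : IsCoprime ((p:ℤ)) ((p:ℤ) + 6) := by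
      have := Nat.isCoprime_iff_coprime.mpr h2; push_cast at this; exact this
    have c08 : IsCoprime ((p:ℤ)) ((p:ℤ) + 8) := by
      have := Nat.isCoprime_iff_coprime.mpr h3; push_cast at this; exact this
    have c26 : IsCoprime ((p:ℤ) + 2) ((p:ℤ) + 6) := by
      have := Nat.isCoprime_iff_coprime.mpr h4; push_cast at this; exact this
    have c28 : IsCoprime ((p:ℤ) + 2) ((p:ℤ) + 8) := by
      have := Nat.isCoprime_iff_coprime.mpr h5; push_cast at this; exact this
    have c68 : IsCoprime ((p:ℤ) + 6) ((p:ℤ) + 8) := by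
      have := Nat.isCoprime_iff_coprime.mpr h6; push_cast at this; exact this
    refine ⟨?_, ?_, ?_, ?_⟩
    · refine (c02.mul_right (c06.mul_right c08)).dvd_of_dvd_mul_right ?_
      exact ⟨z * (((p:ℤ) + 2) * (((p:ℤ) + 6) * ((p:ℤ) + 8)))
        - ((2 * F + 1) * (((p:ℤ) + 6) * ((p:ℤ) + 8))
          + (720 * F + 1) * (((p:ℤ) + 2) * ((p:ℤ) + 8))
          + (40320 * F + 1) * (((p:ℤ) + 2) * ((p:ℤ) + 6))), by linear_combination hZ⟩
    · refine ((c02.symm).mul_right (c26.mul_right c28)).dvd_of_dvd_mul_right ?_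
      exact ⟨z * ((p:ℤ) * (((p:ℤ) + 6) * ((p:ℤ) + 8)))
        - ((F + 1) * (((p:ℤ) + 6) * ((p:ℤ) + 8))
          + (720 * F + 1) * ((p:ℤ) * ((p:ℤ) + 8))
          + (40320 * F + 1) * ((p:ℤ) * ((p:ℤ) + 6))), by linear_combination hZ⟩
    · refine ((c06.symm).mul_right ((c26.symm).mul_right c68)).dvd_of_dvd_mul_right ?_
      exact ⟨z * ((p:ℤ) * (((p:ℤ) + 2) * ((p:ℤ) + 8)))
        - ((F + 1) * (((p:ℤ) + 2) * ((p:ℤ) + 8))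
          + (2 * F + 1) * ((p:ℤ) * ((p:ℤ) + 8))
          + (40320 * F + 1) * ((p:ℤ) * ((p:ℤ) + 2))), by linear_combination hZ⟩
    · refine ((c08.symm).mul_right ((c28.symm).mul_right (c68.symm))).dvd_of_dvd_mul_right ?_
      exact ⟨z * ((p:ℤ) * (((p:ℤ) + 2) * ((p:ℤ) + 6)))
        - ((F + 1) * (((p:ℤ) + 2) * ((p:ℤ) + 6))
          + (2 * F + 1) * ((p:ℤ) * ((p:ℤ) + 6))
          + (720 * F + 1) * ((p:ℤ) * ((p:ℤ) + 2))), by linear_combination hZ⟩
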